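/- Suppose α > 0 satisfies max_{y∈Y} xᵀAy − v* ≥ α‖x − Π_{X*}(x)‖ for all x ∈ X. Let μ > 0, let σ ∈ X, and let x^μ_σ be the unique minimizer over X of x ↦ max_{y∈Y} xᵀAy + (μ/2)‖x − σ‖². If x^μ_σ ∉ X*, then ‖x^μ_σ − σ‖ ≥ α/μ. -/

import Mathlib

open scoped RealInnerProductSpace Classical

noncomputable section

abbrev E (k : ℕ) : Type := EuclideanSpace ℝ (Fin k)

/-- Interpret a plain vector as an element of Euclidean space. -/
def toE {k : ℕ} (v : Fin k → ℝ) : E k := (WithLp.equiv 2 (Fin k → ℝ)).symm v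

/-- The bilinear payoff `xᵀ A y`. -/
def pay {m n : ℕ} (A : Matrix (Fin m) (Fin n) ℝ) (x : E m) (y : E n) : ℝ :=
  ⟪x, toE (A.mulVec y)⟫

/-- Euclidean projection onto a set (well-defined for nonempty closed convex sets). -/
def projOn {k : ℕ} (S : Set (E k)) (x : E k) : E k :=
  if h : ∃ p ∈ S, ∀ q ∈ S, ‖x - p‖ ≤ ‖x - q‖ then h.choose else x

/-- The largest singular value (ℓ²-operator norm) of a matrix. -/
def matNorm {m n : ℕ} (A : Matrix (Fin m) (Fin n) ℝ) : ℝ :=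
  ‖(Matrix.toEuclideanLin A).toContinuousLinearMap‖

def gmax {m n : ℕ} (A : Matrix (Fin m) (Fin n) ℝ) (Y : Set (E n)) (x : E m) : ℝ :=
  sSup ((pay A x) '' Y)

def vStar {m n : ℕ} (A : Matrix (Fin m) (Fin n) ℝ) (X : Set (E m)) (Y : Set (E n)) : ℝ :=
  sInf (gmax A Y '' X)

def minimaxSet {m n : ℕ} (A : Matrix (Fin m) (Fin n) ℝ) (X : Set (E m)) (Y : Set (E n)) :
    Set (E m) :=
  {x | x ∈ X ∧ ∀ x' ∈ X, gmax A Y x ≤ gmax A Y x'}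

def hmin {m n : ℕ} (A : Matrix (Fin m) (Fin n) ℝ) (X : Set (E m)) (μ : ℝ) (y : E n) : ℝ :=
  sInf ((fun x => pay A x y + μ / 2 * ‖x‖ ^ 2) '' X)

def maximinSet {m n : ℕ} (A : Matrix (Fin m) (Fin n) ℝ) (X : Set (E m)) (Y : Set (E n))
    (μ : ℝ) : Set (E n) :=
  {y | y ∈ Y ∧ ∀ y' ∈ Y, hmin A X μ y' ≤ hmin A X μ y}

def diamXY {m n : ℕ} (X : Set (E m)) (Y : Set (E n)) : ℝ :=
  sSup {d | ∃ x ∈ X, ∃ y ∈ Y, ∃ x' ∈ X, ∃ y' ∈ Y,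
    d = Real.sqrt (‖x - x'‖ ^ 2 + ‖y - y'‖ ^ 2)}

def prodNorm {m n : ℕ} (u : E m) (v : E n) : ℝ := Real.sqrt (‖u‖ ^ 2 + ‖v‖ ^ 2)

def simplex (k : ℕ) : Set (E k) := {x | (∀ i, 0 ≤ x i) ∧ ∑ i, x i = 1}

def unif (k : ℕ) : E k := WithLp.toLp 2 (fun _ => (k : ℝ)⁻¹)


def isPolytope {k : ℕ} (S : Set (E k)) : Prop :=
  ∃ s : Finset (E k), s.Nonempty ∧ S = convexHull ℝ (s : Set (E k))


section aux
variable {m n : ℕ}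

lemma polytope_props {k : ℕ} {S : Set (E k)} (h : isPolytope S) :
    IsCompact S ∧ S.Nonempty ∧ Convex ℝ S := by
  obtain ⟨s, hs, rfl⟩ := h
  refine ⟨s.finite_toSet.isCompact_convexHull ℝ, ?_, convex_convexHull ℝ _⟩
  obtain ⟨a, ha⟩ := hs
  exact ⟨a, subset_convexHull ℝ _ ha⟩

lemma pay_eq (A : Matrix (Fin m) (Fin n) ℝ) (x : E m) (y : E n) :
    pay A x y = ⟪x, (Matrix.toEuclideanLin A).toContinuousLinearMap y⟫ := rfl

lemma pay_cont_y (A : Matrix (Fin m) (Fin n) ℝ) (x : E m) :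
    Continuous (pay A x) := by
  have h : pay A x = fun y => ⟪x, (Matrix.toEuclideanLin A).toContinuousLinearMap y⟫ := rfl
  rw [h]
  exact Continuous.inner continuous_const
    (Matrix.toEuclideanLin A).toContinuousLinearMap.continuous

lemma gmax_continuous (A : Matrix (Fin m) (Fin n) ℝ) {Y : Set (E n)}
    (hYc : IsCompact Y) (hYne : Y.Nonempty) : Continuous (gmax A Y) := by
  set L := (Matrix.toEuclideanLin A).toContinuousLinearMap with hL
  obtain ⟨K, hK⟩ := (hYc.image L.continuous).isBounded.exists_norm_le
  have hK' : ∀ y ∈ Y, ‖L y‖ ≤ K := fun y hy => hK _ (Set.mem_image_of_mem _ hy)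
  have hK0 : 0 ≤ K := by
    obtain ⟨y, hy⟩ := hYne
    exact le_trans (norm_nonneg _) (hK' y hy)
  have bdd : ∀ x : E m, BddAbove (pay A x '' Y) :=
    fun x => (hYc.image (pay_cont_y A x)).bddAbove
  have key : ∀ x x' : E m, gmax A Y x ≤ gmax A Y x' + K * ‖x - x'‖ := by
    intro x x'
    apply csSup_le (hYne.image _)
    rintro a ⟨y, hy, rfl⟩
    have h1 : pay A x' y ≤ gmax A Y x' := le_csSup (bdd x') (Set.mem_image_of_mem _ hy)
    have h2 : pay A x y - pay A x' y = ⟪x - x', L y⟫ := by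
      simp only [pay_eq, ← hL, inner_sub_left]
    have h3 : ⟪x - x', L y⟫ ≤ ‖x - x'‖ * ‖L y‖ := real_inner_le_norm _ _
    have h4 : ‖x - x'‖ * ‖L y‖ ≤ ‖x - x'‖ * K :=
      mul_le_mul_of_nonneg_left (hK' y hy) (norm_nonneg _)
    nlinarith [norm_nonneg (x - x')]
  have lip : LipschitzWith (Real.toNNReal K) (gmax A Y) := by
    rw [lipschitzWith_iff_dist_le_mul]
    intro x x'
    rw [Real.dist_eq, dist_eq_norm, Real.coe_toNNReal _ hK0, abs_sub_le_iff]
    constructor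
    · have := key x x'; linarith
    · have := key x' x; rw [norm_sub_rev] at this; linarith
  exact lip.continuous

end aux

set_option maxHeartbeats 1000000 in
/-- If the minimizer `xμσ` of the anchored perturbed objective is not a
minimax strategy of the original game, then it is at distance at least `α/μ` from the
anchor `σ`. -/
theorem anchored_perturbation_distance_from_anchor
    {m n : ℕ} (A : Matrix (Fin m) (Fin n) ℝ) (X : Set (E m)) (Y : Set (E n))
    (hX : isPolytope X) (hY : isPolytope Y)
    (α : ℝ) (hα : 0 < α)
    (hsub : ∀ x ∈ X, gmax A Y x - vStar A X Y ≥ α * ‖x - projOn (minimaxSet A X Y) x‖)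
    (μ : ℝ) (hμ : 0 < μ)
    (σ : E m) (hσ : σ ∈ X)
    -- `xμσ` is the (unique) minimizer of `x ↦ max_{y ∈ Y} xᵀAy + (μ/2)‖x - σ‖²` over `X`
    (xμσ : E m) (hxμσ : xμσ ∈ X)
    (hxμσmin : ∀ x ∈ X,
      gmax A Y xμσ + μ / 2 * ‖xμσ - σ‖ ^ 2 ≤ gmax A Y x + μ / 2 * ‖x - σ‖ ^ 2)
    (hnot : xμσ ∉ minimaxSet A X Y) :
    ‖xμσ - σ‖ ≥ α / μ := by
  obtain ⟨hXc, hXne, hXconv⟩ := polytope_props hX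
  obtain ⟨hYc, hYne, hYconv⟩ := polytope_props hY
  have hg : Continuous (gmax A Y) := gmax_continuous A hYc hYne
  have bdd : ∀ x : E m, BddAbove (pay A x '' Y) :=
    fun x => (hYc.image (pay_cont_y A x)).bddAbove
  -- minimax set is nonempty and compact
  have hMeq : minimaxSet A X Y = X ∩ ⋂ x' ∈ X, {x | gmax A Y x ≤ gmax A Y x'} := by
    ext x; simp [minimaxSet]
  have hMclosed : IsClosed (minimaxSet A X Y) := by
    rw [hMeq]
    exact hXc.isClosed.inter (isClosed_biInter fun x' _ =>
      isClosed_le hg continuous_const)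
  have hMne : (minimaxSet A X Y).Nonempty := by
    obtain ⟨x₀, hx₀X, hx₀⟩ := hXc.exists_isMinOn hXne hg.continuousOn
    exact ⟨x₀, hx₀X, fun x' hx' => hx₀ hx'⟩
  have hMcomp : IsCompact (minimaxSet A X Y) := by
    rw [hMeq]; exact hXc.inter_right (isClosed_biInter fun x' _ =>
      isClosed_le hg continuous_const)
  -- projection exists
  have hex : ∃ p ∈ minimaxSet A X Y, ∀ q ∈ minimaxSet A X Y, ‖xμσ - p‖ ≤ ‖xμσ - q‖ := by
    obtain ⟨p, hpM, hp⟩ := hMcomp.exists_isMinOn hMne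
      (Continuous.continuousOn (by continuity : Continuous fun q : E m => ‖xμσ - q‖))
    exact ⟨p, hpM, fun q hq => hp hq⟩
  set p := projOn (minimaxSet A X Y) xμσ with hpdef
  have hproj : p = hex.choose := by rw [hpdef, projOn, dif_pos hex]
  have hpM : p ∈ minimaxSet A X Y := by rw [hproj]; exact hex.choose_spec.1
  have hpX : p ∈ X := hpM.1
  set d := ‖xμσ - p‖ with hddef
  have hd : 0 < d := by
    rw [hddef, norm_pos_iff, sub_ne_zero]
    intro h; exact hnot (h ▸ hpM)
  -- game value equals gmax p
  have hv : vStar A X Y = gmax A Y p := by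
    have hlb : ∀ b ∈ gmax A Y '' X, gmax A Y p ≤ b := by
      rintro b ⟨x, hx, rfl⟩; exact hpM.2 x hx
    exact le_antisymm (csInf_le ⟨gmax A Y p, hlb⟩ (Set.mem_image_of_mem _ hpX))
      (le_csInf (hXne.image _) hlb)
  have hsub' : α * d ≤ gmax A Y xμσ - vStar A X Y := hsub xμσ hxμσ
  clear_value p d
  -- key inequality for each t ∈ (0,1]
  have main : ∀ t : ℝ, 0 < t → t ≤ 1 → α ≤ μ * ‖xμσ - σ‖ + μ / 2 * t * d := by
    intro t ht0 ht1
    set xt : E m := xμσ + t • (p - xμσ) with hxt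
    have hxtX : xt ∈ X := by
      have h := hXconv hxμσ hpX (a := 1 - t) (b := t) (by linarith) (le_of_lt ht0)
        (by ring)
      have : (1 - t) • xμσ + t • p = xt := by
        rw [hxt]; module
      rw [this] at h; exact h
    -- convexity of gmax along the segment
    have hgconv : gmax A Y xt ≤ (1 - t) * gmax A Y xμσ + t * gmax A Y p := by
      apply csSup_le (hYne.image _)
      rintro a ⟨y, hy, rfl⟩
      have h1 : pay A xμσ y ≤ gmax A Y xμσ := le_csSup (bdd _) (Set.mem_image_of_mem _ hy)
      have h2 : pay A p y ≤ gmax A Y p := le_csSup (bdd _) (Set.mem_image_of_mem _ hy)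
      have h3 : pay A xt y = (1 - t) * pay A xμσ y + t * pay A p y := by
        simp only [pay_eq]
        have : xt = (1 - t) • xμσ + t • p := by rw [hxt]; module
        rw [this, inner_add_left, real_inner_smul_left, real_inner_smul_left]
      rw [h3]
      have := mul_le_mul_of_nonneg_left h1 (by linarith : (0:ℝ) ≤ 1 - t)
      have := mul_le_mul_of_nonneg_left h2 (le_of_lt ht0)
      linarith
    -- norm expansion
    have hnorm : ‖xt - σ‖ ^ 2 =
        ‖xμσ - σ‖ ^ 2 + 2 * t * ⟪xμσ - σ, p - xμσ⟫ + t ^ 2 * d ^ 2 := by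
      have h1 : xt - σ = (xμσ - σ) + t • (p - xμσ) := by rw [hxt]; abel
      rw [h1, norm_add_sq_real, real_inner_smul_right, norm_smul,
        Real.norm_eq_abs, abs_of_pos ht0, mul_pow]
      rw [hddef, norm_sub_rev p xμσ]
      ring
    have hmin := hxμσmin xt hxtX
    have hcs : ⟪xμσ - σ, p - xμσ⟫ ≤ ‖xμσ - σ‖ * d := by
      have h := real_inner_le_norm (xμσ - σ) (p - xμσ)
      have h2 : ‖p - xμσ‖ = d := by rw [hddef, norm_sub_rev]
      rwa [h2] at h
    -- combine
    have hcomb : t * (α * d) ≤ μ * t * (‖xμσ - σ‖ * d) + μ / 2 * t ^ 2 * d ^ 2 := by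
      have e1 : t * (gmax A Y xμσ - vStar A X Y) ≤
          μ * t * ⟪xμσ - σ, p - xμσ⟫ + μ / 2 * t ^ 2 * d ^ 2 := by
        rw [hv]
        nlinarith [hmin, hgconv, hnorm, hμ.le]
      have e2 : t * (α * d) ≤ t * (gmax A Y xμσ - vStar A X Y) :=
        mul_le_mul_of_nonneg_left hsub' (le_of_lt ht0)
      have e3 : μ * t * ⟪xμσ - σ, p - xμσ⟫ ≤ μ * t * (‖xμσ - σ‖ * d) :=
        mul_le_mul_of_nonneg_left hcs (by positivity)
      linarith
    -- divide by t * d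
    nlinarith [mul_pos ht0 hd, hcomb]
  have hfin : α ≤ μ * ‖xμσ - σ‖ := by
    by_contra h
    push_neg at h
    set ε := α - μ * ‖xμσ - σ‖ with hε
    have hε0 : 0 < ε := by linarith
    set t := min 1 (ε / (μ * d)) with ht
    have ht0 : 0 < t := lt_min one_pos (div_pos hε0 (mul_pos hμ hd))
    have ht1 : t ≤ 1 := min_le_left _ _
    have htε : μ / 2 * t * d ≤ ε / 2 := by
      have : t ≤ ε / (μ * d) := min_le_right _ _
      have h2 : μ / 2 * t * d ≤ μ / 2 * (ε / (μ * d)) * d :=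
        mul_le_mul_of_nonneg_right
          (mul_le_mul_of_nonneg_left (min_le_right _ _) (by positivity)) hd.le
      have h3 : μ / 2 * (ε / (μ * d)) * d = ε / 2 := by
        field_simp
      linarith
    have := main t ht0 ht1
    linarith
  rw [ge_iff_le, div_le_iff₀ hμ]
  linarith
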